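/- Let μ ∈ ℝ, σ > 0 and t ∈ ℝ, and let N, Ñ be independent standard normal random variables. Then the expected threshold-weighted CRPS of the Gaussian distribution Φ_{μ,σ²}, with weighting measure γ₁ having Lebesgue density u ↦ 1{u ≥ t}, admits the representation CRPS_{γ₁}(Φ_{μ,σ²}) = σ · E[ ( Ñ − max( N, (t − μ)/σ ) )₊ ], where x₊ = max(x, 0). -/

import Mathlib

open MeasureTheory ProbabilityTheory Set

noncomputable section

/-- The standard normal distribution `N(0,1)` on `ℝ`. -/
def stdNormal : Measure ℝ := gaussianReal 0 1

/-- The standard normal CDF `Φ`. -/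
def Phi (x : ℝ) : ℝ := (stdNormal (Iic x)).toReal

/-- The standard normal PDF `φ`. -/
def stdPDF (x : ℝ) : ℝ := (Real.sqrt (2 * Real.pi))⁻¹ * Real.exp (-(x ^ 2) / 2)

/-- The CDF of the normal distribution `N(μ, σ²)`: `Φ_{μ,σ²}(u) = Φ((u - μ)/σ)`. -/
def normCDF (μ σ : ℝ) (u : ℝ) : ℝ := Phi ((u - μ) / σ)

/-- The normal distribution `N(μ, σ²)` as a measure on `ℝ`. -/
def gaussMeasure (μ σ : ℝ) : Measure ℝ := gaussianReal μ ⟨σ ^ 2, sq_nonneg σ⟩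

/-- Threshold-weighted CRPS of a predictive CDF `F` at observation `y`, with weighting
measure `γ`: `∫ (F u - 1{y ≤ u})² dγ(u)`. -/
def twCRPS (γ : Measure ℝ) (F : ℝ → ℝ) (y : ℝ) : ℝ :=
  ∫ u, (F u - (Ici y).indicator (fun _ => (1 : ℝ)) u) ^ 2 ∂γ

/-- Expected threshold-weighted CRPS of the Gaussian `N(μ, σ²)` with weighting measure `γ`:
the expectation of `y ↦ CRPS_γ(Φ_{μ,σ²}, y)` for `y ∼ N(μ, σ²)`. -/
def etwCRPS (γ : Measure ℝ) (μ σ : ℝ) : ℝ :=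
  ∫ y, twCRPS γ (normCDF μ σ) y ∂(gaussMeasure μ σ)

/-- `γ₁`: the Borel measure on `ℝ` with Lebesgue density `u ↦ 1{u ≥ t}`. -/
def gamma1 (t : ℝ) : Measure ℝ :=
  volume.withDensity ((Ici t).indicator fun _ => (1 : ENNReal))

/-- `γ₂`: the Borel measure on `ℝ` with Lebesgue density `u ↦ (1/σγ) φ((u - t)/σγ)`. -/
def gamma2 (t σγ : ℝ) : Measure ℝ :=
  volume.withDensity fun u => ENNReal.ofReal (1 / σγ * stdPDF ((u - t) / σγ))

end

noncomputable section AuxLemmas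

open scoped ENNReal

instance : IsProbabilityMeasure stdNormal := by unfold stdNormal; infer_instance

instance (μ σ : ℝ) : IsProbabilityMeasure (gaussMeasure μ σ) := by
  unfold gaussMeasure; exact instIsProbabilityMeasureGaussianReal _ _

lemma gamma1_eq (t : ℝ) : gamma1 t = volume.restrict (Ici t) := by
  rw [gamma1, withDensity_indicator measurableSet_Ici]
  exact withDensity_one

lemma gaussMeasure_map (μ σ : ℝ) :
    stdNormal.map (fun x => σ * x + μ) = gaussMeasure μ σ := by
  have h : (fun x : ℝ => σ * x + μ) = (· + μ) ∘ (σ * ·) := rfl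
  rw [h, ← Measure.map_map (measurable_add_const μ) (measurable_const_mul σ)]
  rw [stdNormal, gaussianReal_map_const_mul, gaussianReal_map_add_const, gaussMeasure]
  norm_num
  rfl

lemma gaussMeasure_Iic {σ : ℝ} (hσ : 0 < σ) (μ u : ℝ) :
    gaussMeasure μ σ (Iic u) = stdNormal (Iic ((u - μ) / σ)) := by
  rw [← gaussMeasure_map,
    Measure.map_apply (by fun_prop) measurableSet_Iic]
  congr 1
  ext x
  simp only [mem_preimage, mem_Iic]
  rw [le_div_iff₀ hσ]
  constructor <;> intro h <;> nlinarith

lemma gaussMeasure_Ioi {σ : ℝ} (hσ : 0 < σ) (μ u : ℝ) :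
    gaussMeasure μ σ (Ioi u) = stdNormal (Ioi ((u - μ) / σ)) := by
  rw [← gaussMeasure_map,
    Measure.map_apply (by fun_prop) measurableSet_Ioi]
  congr 1
  ext x
  simp only [mem_preimage, mem_Ioi]
  rw [div_lt_iff₀ hσ]
  constructor <;> intro h <;> nlinarith

lemma measurable_Phi : Measurable Phi :=
  Monotone.measurable fun _ _ h =>
    ENNReal.toReal_mono (measure_ne_top _ _) (measure_mono (Iic_subset_Iic.mpr h))

lemma measurable_normCDF (μ σ : ℝ) : Measurable (normCDF μ σ) := by
  unfold normCDF
  exact measurable_Phi.comp (by fun_prop)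

lemma Phi_nonneg (x : ℝ) : 0 ≤ Phi x := ENNReal.toReal_nonneg

lemma Phi_le_one (x : ℝ) : Phi x ≤ 1 := by
  have h := prob_le_one (μ := stdNormal) (s := Iic x)
  have := ENNReal.toReal_mono ENNReal.one_ne_top h
  simpa [Phi] using this

lemma normCDF_nonneg (μ σ u : ℝ) : 0 ≤ normCDF μ σ u := Phi_nonneg _

lemma normCDF_le_one (μ σ u : ℝ) : normCDF μ σ u ≤ 1 := Phi_le_one _

lemma gauss_Iic_ofReal {σ : ℝ} (hσ : 0 < σ) (μ u : ℝ) :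
    gaussMeasure μ σ (Iic u) = ENNReal.ofReal (normCDF μ σ u) := by
  rw [gaussMeasure_Iic hσ]
  rw [show normCDF μ σ u = (stdNormal (Iic ((u - μ) / σ))).toReal from rfl]
  rw [ENNReal.ofReal_toReal (measure_ne_top _ _)]

lemma gauss_Ioi_eq (μ σ u : ℝ) :
    gaussMeasure μ σ (Ioi u) = 1 - gaussMeasure μ σ (Iic u) := by
  rw [← compl_Iic, prob_compl_eq_one_sub measurableSet_Iic]

lemma gauss_Ioi_ofReal {σ : ℝ} (hσ : 0 < σ) (μ u : ℝ) :
    gaussMeasure μ σ (Ioi u) = ENNReal.ofReal (1 - normCDF μ σ u) := by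
  rw [gauss_Ioi_eq, gauss_Iic_ofReal hσ,
    ENNReal.ofReal_sub _ (normCDF_nonneg μ σ u), ENNReal.ofReal_one]

lemma ind_eq (y u : ℝ) :
    (Ici y).indicator (fun _ => (1 : ℝ)) u = (Iic u).indicator (fun _ => (1 : ℝ)) y := by
  by_cases h : y ≤ u <;> simp [indicator_apply, h]

lemma inner_eq {σ : ℝ} (hσ : 0 < σ) (μ u : ℝ) :
    ∫⁻ y, ENNReal.ofReal ((normCDF μ σ u - (Iic u).indicator (fun _ => (1 : ℝ)) y) ^ 2)
        ∂(gaussMeasure μ σ)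
      = gaussMeasure μ σ (Iic u) * gaussMeasure μ σ (Ioi u) := by
  have h0 : 0 ≤ normCDF μ σ u := normCDF_nonneg μ σ u
  have h1 : normCDF μ σ u ≤ 1 := normCDF_le_one μ σ u
  set g := normCDF μ σ u with hg
  rw [← lintegral_add_compl _ (measurableSet_Iic (a := u)), compl_Iic]
  have hA : ∫⁻ y in Iic u,
      ENNReal.ofReal ((g - (Iic u).indicator (fun _ => (1 : ℝ)) y) ^ 2) ∂(gaussMeasure μ σ)
      = ENNReal.ofReal ((1 - g) ^ 2) * gaussMeasure μ σ (Iic u) := by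
    have hpt : ∀ᵐ y ∂(gaussMeasure μ σ), y ∈ Iic u →
        ENNReal.ofReal ((g - (Iic u).indicator (fun _ => (1 : ℝ)) y) ^ 2)
          = (fun _ : ℝ => ENNReal.ofReal ((1 - g) ^ 2)) y :=
      ae_of_all _ fun y hy => by rw [indicator_of_mem hy]; congr 1; ring
    rw [setLIntegral_congr_fun_ae measurableSet_Iic hpt, setLIntegral_const]
  have hB : ∫⁻ y in Ioi u,
      ENNReal.ofReal ((g - (Iic u).indicator (fun _ => (1 : ℝ)) y) ^ 2) ∂(gaussMeasure μ σ)
      = ENNReal.ofReal (g ^ 2) * gaussMeasure μ σ (Ioi u) := by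
    have hpt : ∀ᵐ y ∂(gaussMeasure μ σ), y ∈ Ioi u →
        ENNReal.ofReal ((g - (Iic u).indicator (fun _ => (1 : ℝ)) y) ^ 2)
          = (fun _ : ℝ => ENNReal.ofReal (g ^ 2)) y :=
      ae_of_all _ fun y hy => by
        rw [indicator_of_notMem (by simpa using hy)]; congr 1; ring
    rw [setLIntegral_congr_fun_ae measurableSet_Ioi hpt, setLIntegral_const]
  rw [hA, hB, gauss_Iic_ofReal hσ, gauss_Ioi_ofReal hσ, ← hg]
  rw [← ENNReal.ofReal_mul (by positivity), ← ENNReal.ofReal_mul (by positivity),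
    ← ENNReal.ofReal_add (by nlinarith) (by nlinarith), ← ENNReal.ofReal_mul h0]
  congr 1
  ring

lemma ofReal_max_zero (a : ℝ) : ENNReal.ofReal (max a 0) = ENNReal.ofReal a := by
  rcases le_total a 0 with h | h
  · rw [max_eq_right h, ENNReal.ofReal_zero, eq_comm, ENNReal.ofReal_eq_zero.mpr h]
  · rw [max_eq_left h]

lemma integrable_id_stdNormal : Integrable (fun x : ℝ => x) stdNormal := by
  rw [stdNormal, gaussianReal_of_var_ne_zero _ one_ne_zero]
  rw [integrable_withDensity_iff (measurable_gaussianPDF _ _)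
    (ae_of_all _ fun x => ENNReal.ofReal_lt_top)]
  have heq : (fun x : ℝ => x * (gaussianPDF 0 1 x).toReal)
      = fun x => (Real.sqrt (2 * Real.pi))⁻¹ * (x * Real.exp (-(1/2 : ℝ) * x ^ 2)) := by
    ext x
    rw [gaussianPDF, ENNReal.toReal_ofReal (gaussianPDFReal_nonneg _ _ _), gaussianPDFReal]
    push_cast
    rw [show -(x - 0) ^ 2 / (2 * 1) = -(1/2 : ℝ) * x ^ 2 by ring]
    ring_nf
  rw [heq]
  exact (integrable_mul_exp_neg_mul_sq (by norm_num : (0:ℝ) < 1/2)).const_mul _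

end AuxLemmas

open scoped ENNReal


theorem stmt_4 (μ σ t : ℝ) (hσ : 0 < σ) :
    etwCRPS (gamma1 t) μ σ =
      σ * ∫ p : ℝ × ℝ, max (p.2 - max p.1 ((t - μ) / σ)) 0 ∂(stdNormal.prod stdNormal) := by
  classical
  set c : ℝ := (t - μ) / σ with hc
  set P : Measure ℝ := gaussMeasure μ σ with hP
  set S : Measure ℝ := stdNormal with hS
  set νt : Measure ℝ := volume.restrict (Ici t) with hνt
  set L : ℝ≥0∞ := ∫⁻ v, (Ici c).indicator (fun v => S (Iic v) * S (Ioi v)) v ∂volume with hL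
  set f : ℝ → ℝ → ℝ≥0∞ := fun y u =>
    ENNReal.ofReal ((normCDF μ σ u - (Iic u).indicator (fun _ => (1:ℝ)) y) ^ 2) with hf_def
  have hf : Measurable (Function.uncurry f) := by
    have h1 : Function.uncurry f = fun q : ℝ × ℝ =>
        ENNReal.ofReal ((normCDF μ σ q.2
          - {p : ℝ × ℝ | p.1 ≤ p.2}.indicator (fun _ => (1:ℝ)) q) ^ 2) := by
      ext q
      simp only [Function.uncurry, hf_def]
      by_cases h : q.1 ≤ q.2 <;> simp [indicator_apply, h]
    rw [h1]
    exact ((((measurable_normCDF μ σ).comp measurable_snd).sub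
      (measurable_const.indicator (measurableSet_le measurable_fst measurable_snd))).pow_const
        2).ennreal_ofReal
  have htw : ∀ y, twCRPS (gamma1 t) (normCDF μ σ) y = (∫⁻ u, f y u ∂νt).toReal := by
    intro y
    rw [twCRPS, gamma1_eq]
    rw [integral_eq_lintegral_of_nonneg_ae
      (f := fun u => (normCDF μ σ u - (Ici y).indicator (fun _ => (1:ℝ)) u) ^ 2)
      (ae_of_all _ fun u => sq_nonneg _)
      (((measurable_normCDF μ σ).sub
        (measurable_const.indicator measurableSet_Ici)).pow_const 2).aestronglyMeasurable]
    exact congrArg ENNReal.toReal (lintegral_congr fun u => by rw [ind_eq y u])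
  have hTon : ∫⁻ u, P (Ioi u) ∂νt < ⊤ := by
    set g2 : ℝ → ℝ → ℝ≥0∞ := fun u y =>
      ({q : ℝ × ℝ | q.1 < q.2}).indicator (fun _ => (1:ℝ≥0∞)) (u, y) with hg2_def
    have hg2 : Measurable (Function.uncurry g2) :=
      measurable_const.indicator (measurableSet_lt measurable_fst measurable_snd)
    have h1 : ∀ u, ∫⁻ y, g2 u y ∂P = P (Ioi u) := by
      intro u
      have he : ∀ y, g2 u y = (Ioi u).indicator (fun _ => (1:ℝ≥0∞)) y := by
        intro y; by_cases h : u < y <;> simp [hg2_def, indicator_apply, h]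
      rw [lintegral_congr he]
      exact lintegral_indicator_one measurableSet_Ioi
    have h2 : ∀ y : ℝ, ∫⁻ u, g2 u y ∂νt = νt (Iio y) := by
      intro y
      have he : ∀ u, g2 u y = (Iio y).indicator (fun _ => (1:ℝ≥0∞)) u := by
        intro u; by_cases h : u < y <;> simp [hg2_def, indicator_apply, h]
      rw [lintegral_congr he]
      exact lintegral_indicator_one measurableSet_Iio
    calc ∫⁻ u, P (Ioi u) ∂νt = ∫⁻ u, ∫⁻ y, g2 u y ∂P ∂νt :=
          lintegral_congr fun u => (h1 u).symm
      _ = ∫⁻ y, ∫⁻ u, g2 u y ∂νt ∂P := lintegral_lintegral_swap hg2.aemeasurable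
      _ = ∫⁻ y, νt (Iio y) ∂P := lintegral_congr h2
      _ ≤ ∫⁻ y, ENNReal.ofReal (|y| + |t|) ∂P := by
          refine lintegral_mono fun y => ?_
          rw [hνt, Measure.restrict_apply measurableSet_Iio, inter_comm, Ici_inter_Iio,
            Real.volume_Ico]
          refine ENNReal.ofReal_le_ofReal ?_
          have h3 := le_abs_self y; have h4 := neg_abs_le t; linarith
      _ < ⊤ := by
          have hid : Integrable (fun y : ℝ => y) P := by
            rw [hP, ← gaussMeasure_map]
            refine (integrable_map_measure measurable_id.aestronglyMeasurable
              (by fun_prop)).mpr ?_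
            simpa [Function.comp] using
              ((integrable_id_stdNormal.const_mul σ).add (integrable_const μ))
          exact (hid.abs.add (integrable_const _)).lintegral_lt_top
  have hbound : ∀ y, (∫⁻ u, f y u ∂νt) < ⊤ := by
    intro y
    have hb : ∀ u, f y u ≤ (Iio y).indicator (fun _ => (1:ℝ≥0∞)) u + P (Ioi u) := by
      intro u
      by_cases h : y ≤ u
      · have h2 : f y u = ENNReal.ofReal ((normCDF μ σ u - 1) ^ 2) := by
          simp only [hf_def]; rw [indicator_of_mem (mem_Iic.mpr h)]
        rw [h2]
        refine le_add_left ?_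
        rw [hP, gauss_Ioi_ofReal hσ]
        refine ENNReal.ofReal_le_ofReal ?_
        nlinarith [normCDF_nonneg μ σ u, normCDF_le_one μ σ u]
      · have h2 : f y u = ENNReal.ofReal ((normCDF μ σ u) ^ 2) := by
          simp only [hf_def]; rw [indicator_of_notMem (by simpa using h)]; norm_num
        rw [h2, indicator_of_mem (mem_Iio.mpr (not_le.mp h))]
        refine le_add_right ?_
        exact ENNReal.ofReal_le_one.mpr
          (by nlinarith [normCDF_nonneg μ σ u, normCDF_le_one μ σ u])
    calc ∫⁻ u, f y u ∂νt
        ≤ ∫⁻ u, ((Iio y).indicator (fun _ => (1:ℝ≥0∞)) u + P (Ioi u)) ∂νt := lintegral_mono hb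
      _ = νt (Iio y) + ∫⁻ u, P (Ioi u) ∂νt := by
          rw [lintegral_add_left (measurable_const.indicator measurableSet_Iio)]
          congr 1
          exact lintegral_indicator_one measurableSet_Iio
      _ < ⊤ := by
          refine ENNReal.add_lt_top.mpr ⟨?_, hTon⟩
          rw [hνt, Measure.restrict_apply measurableSet_Iio, inter_comm, Ici_inter_Iio,
            Real.volume_Ico]
          exact ENNReal.ofReal_lt_top
  have hImeas : AEMeasurable (fun y => ∫⁻ u, f y u ∂νt) P :=
    (Measurable.lintegral_prod_right hf).aemeasurable
  have hLHS1 : etwCRPS (gamma1 t) μ σ = (∫⁻ y, ∫⁻ u, f y u ∂νt ∂P).toReal := by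
    rw [etwCRPS, ← hP]
    calc ∫ y, twCRPS (gamma1 t) (normCDF μ σ) y ∂P
        = ∫ y, (∫⁻ u, f y u ∂νt).toReal ∂P := integral_congr_ae (ae_of_all _ htw)
      _ = _ := integral_toReal hImeas (ae_of_all _ hbound)
  have hswap : ∫⁻ y, ∫⁻ u, f y u ∂νt ∂P = ∫⁻ u, P (Iic u) * P (Ioi u) ∂νt := by
    rw [lintegral_lintegral_swap hf.aemeasurable]
    exact lintegral_congr fun u => inner_eq hσ μ u
  have hW : Measurable fun u => P (Iic u) * P (Ioi u) :=
    (Monotone.measurable fun a b h => measure_mono (Iic_subset_Iic.mpr h)).mul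
      (Antitone.measurable fun a b h => measure_mono (Ioi_subset_Ioi h))
  have hmapvol : (ENNReal.ofReal σ) • ((volume : Measure ℝ).map (fun v => σ * v + μ))
      = volume := by
    have h1 : (volume : Measure ℝ).map (fun v => σ * v + μ)
        = ENNReal.ofReal |σ⁻¹| • volume := by
      have hcomp : (fun v : ℝ => σ * v + μ) = (· + μ) ∘ (σ * ·) := rfl
      rw [hcomp, ← Measure.map_map (measurable_add_const μ) (measurable_const_mul σ),
        Real.map_volume_mul_left hσ.ne', Measure.map_smul, map_add_right_eq_self]
    rw [h1, smul_smul, abs_of_pos (inv_pos.mpr hσ), ← ENNReal.ofReal_mul hσ.le,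
      mul_inv_cancel₀ hσ.ne', ENNReal.ofReal_one, one_smul]
  have hchg : ∫⁻ u, P (Iic u) * P (Ioi u) ∂νt = ENNReal.ofReal σ * L := by
    rw [hνt, ← lintegral_indicator measurableSet_Ici]
    conv_lhs => rw [← hmapvol]
    rw [lintegral_smul_measure,
      lintegral_map (hW.indicator measurableSet_Ici) (by fun_prop)]
    congr 1
    rw [hL]
    refine lintegral_congr fun v => ?_
    by_cases hcv : c ≤ v
    · have hcv' : t ≤ σ * v + μ := by
        rw [hc, div_le_iff₀ hσ] at hcv; nlinarith
      rw [indicator_of_mem (mem_Ici.mpr hcv'), indicator_of_mem (mem_Ici.mpr hcv)]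
      have e1 : P (Iic (σ * v + μ)) = S (Iic v) := by
        rw [hP, hS, gaussMeasure_Iic hσ]
        congr 2
        field_simp
        ring
      have e2 : P (Ioi (σ * v + μ)) = S (Ioi v) := by
        rw [hP, hS, gaussMeasure_Ioi hσ]
        congr 2
        field_simp
        ring
      rw [e1, e2]
    · have hcv' : ¬ t ≤ σ * v + μ := by
        intro hle; apply hcv; rw [hc, div_le_iff₀ hσ]; nlinarith
      rw [indicator_of_notMem (by simpa using hcv'),
        indicator_of_notMem (by simpa using hcv)]
  have hRHS : ∫ p : ℝ × ℝ, max (p.2 - max p.1 c) 0 ∂(S.prod S) = L.toReal := by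
    rw [integral_eq_lintegral_of_nonneg_ae
      (f := fun p : ℝ × ℝ => max (p.2 - max p.1 c) 0)
      (ae_of_all _ fun p => le_max_right _ _)
      ((continuous_snd.sub (continuous_fst.max continuous_const)).max
        continuous_const).aestronglyMeasurable]
    congr 1
    set D : Set ((ℝ × ℝ) × ℝ) := {q | max q.1.1 c ≤ q.2 ∧ q.2 < q.1.2} with hD_def
    have hD : MeasurableSet D :=
      (measurableSet_le ((measurable_fst.fst).max measurable_const) measurable_snd).inter
        (measurableSet_lt measurable_snd measurable_fst.snd)
    set f2 : ℝ × ℝ → ℝ → ℝ≥0∞ := fun p v => D.indicator (fun _ => (1:ℝ≥0∞)) (p, v)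
      with hf2_def
    have hf2 : Measurable (Function.uncurry f2) := measurable_const.indicator hD
    have step1 : ∀ p : ℝ × ℝ,
        ENNReal.ofReal (max (p.2 - max p.1 c) 0) = ∫⁻ v, f2 p v ∂volume := by
      intro p
      have he : ∀ v, f2 p v = (Ico (max p.1 c) p.2).indicator (fun _ => (1:ℝ≥0∞)) v := by
        intro v
        simp only [hf2_def]
        rw [Set.indicator_apply, Set.indicator_apply]
        refine if_congr ?_ rfl rfl
        simp [hD_def, mem_Ico]
      rw [lintegral_congr he]
      rw [show (∫⁻ v, (Ico (max p.1 c) p.2).indicator (fun _ => (1:ℝ≥0∞)) v ∂volume)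
          = volume (Ico (max p.1 c) p.2) from lintegral_indicator_one measurableSet_Ico,
        Real.volume_Ico, ofReal_max_zero]
    have step2 : ∀ v : ℝ, ∫⁻ p, f2 p v ∂(S.prod S)
        = (Ici c).indicator (fun v => S (Iic v) * S (Ioi v)) v := by
      intro v
      by_cases hcv : c ≤ v
      · have he : ∀ p : ℝ × ℝ,
            f2 p v = ((Iic v) ×ˢ (Ioi v)).indicator (fun _ => (1:ℝ≥0∞)) p := by
          intro p
          simp only [hf2_def]
          rw [Set.indicator_apply, Set.indicator_apply]
          refine if_congr ?_ rfl rfl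
          simp [hD_def, Set.mem_prod, sup_le_iff, hcv, and_assoc]
        rw [lintegral_congr he,
          show (∫⁻ p, ((Iic v) ×ˢ (Ioi v)).indicator (fun _ => (1:ℝ≥0∞)) p ∂(S.prod S))
            = (S.prod S) ((Iic v) ×ˢ (Ioi v)) from
            lintegral_indicator_one (measurableSet_Iic.prod measurableSet_Ioi),
          Measure.prod_prod, indicator_of_mem (mem_Ici.mpr hcv)]
      · have he : ∀ p : ℝ × ℝ, f2 p v = 0 := by
          intro p
          have hn : ¬ (max p.1 c ≤ v ∧ v < p.2) := by
            rintro ⟨h1, -⟩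
            exact hcv (le_trans (le_max_right _ _) h1)
          simp only [hf2_def]
          exact indicator_of_notMem (by simpa [hD_def] using hn) _
        rw [lintegral_congr he, lintegral_zero, indicator_of_notMem (by simpa using hcv)]
    calc ∫⁻ p, ENNReal.ofReal (max (p.2 - max p.1 c) 0) ∂(S.prod S)
        = ∫⁻ p, ∫⁻ v, f2 p v ∂volume ∂(S.prod S) := lintegral_congr step1
      _ = ∫⁻ v, ∫⁻ p, f2 p v ∂(S.prod S) ∂volume := lintegral_lintegral_swap hf2.aemeasurable
      _ = L := by rw [hL]; exact lintegral_congr step2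
  rw [hLHS1, hswap, hchg, ENNReal.toReal_mul, ENNReal.toReal_ofReal hσ.le, hRHS]
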